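/- Let G be a simple graph on a finite vertex set and let NM(G) = A·L be its neighbourhood matrix. Then for all vertices i and j, the vertices i and j are adjacent in G if and only if NM(G)[i,j] > 0. (Hence the graph G can be reconstructed from its neighbourhood matrix.) -/

import Mathlib

/-!
Expanding `L = D - A` gives `(A * L) i j = [i ~ j] * deg j - #(common neighbours of i and j)`.
When `i ~ j` the common neighbours lie in `N(j) \ {i}`, so the entry is positive; otherwise it
is at most `0`.
-/

open SimpleGraph Matrix Finset

namespace SimpleGraph

variable {V α : Type*} [Fintype V] (G : SimpleGraph V) [DecidableRel G.Adj]

theorem adjMatrix_mul_self_apply [NonAssocSemiring α] (i j : V) :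
    (G.adjMatrix α * G.adjMatrix α) i j = Fintype.card (G.commonNeighbors i j) := by
  simp only [adjMatrix_mul_apply, adjMatrix_apply, sum_boole, ← Set.toFinset_card]
  congr
  ext k
  simp [mem_commonNeighbors, adj_comm]

theorem adjMatrix_mul_lapMatrix_apply [DecidableEq V] [NonAssocRing α] (i j : V) :
    (G.adjMatrix α * G.lapMatrix α) i j =
      (if G.Adj i j then (G.degree j : α) else 0) - Fintype.card (G.commonNeighbors i j) := by
  rw [lapMatrix, degMatrix, Matrix.mul_sub, Matrix.sub_apply, mul_diagonal,
    adjMatrix_mul_self_apply, adjMatrix_apply, ite_mul, one_mul, zero_mul]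

end SimpleGraph

theorem adj_iff_nm_pos {V : Type*} [Fintype V] [DecidableEq V] (G : SimpleGraph V)
    [DecidableRel G.Adj] (i j : V) :
    G.Adj i j ↔ 0 < (G.adjMatrix ℤ * G.lapMatrix ℤ) i j := by
  rw [adjMatrix_mul_lapMatrix_apply]
  by_cases hij : G.Adj i j
  · have hlt := hij.symm.card_commonNeighbors_lt_degree
    simp_rw [commonNeighbors_symm G j i] at hlt
    simp only [hij, if_true, true_iff, sub_pos]
    exact_mod_cast hlt
  · simp [hij]
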